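/- arXiv:2501.05259 — 2 statements merged into one kernel-verified Lean document; each statement's English description precedes it below -/
import Mathlib

section
/- The function pop : ℤ × List ℤ × ℕ → ℤ × List ℤ × ℕ is a bijection. -/
def push : ℤ × List ℤ × ℕ → ℤ × List ℤ × ℕ
  | (v, t, 0) => (0, v::t, 0)
  | (0, v::t, c+1) => (0, v::t, c+1)
  | (u, s, c+1) => (u, s, c)

def pop : ℤ × List ℤ × ℕ → ℤ × List ℤ × ℕ
  | (0, v::t, 0) => (v, t, 0)
  | (0, v::t, c+1) => (0, v::t, c+1)
  | (u, s, c) => (u, s, c+1)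

theorem leftInverse_push_pop : Function.LeftInverse push pop := by
  rintro ⟨u, _ | ⟨v, t⟩, _ | c⟩ <;> by_cases hu : u = 0 <;> simp [pop, push, hu]

theorem rightInverse_push_pop : Function.RightInverse push pop := by
  rintro ⟨u, _ | ⟨v, t⟩, _ | c⟩ <;> by_cases hu : u = 0 <;> simp [pop, push, hu]

theorem pop_bijective : Function.Bijective pop :=
  ⟨leftInverse_push_pop.injective, rightInverse_push_pop.surjective⟩
end

section
/- The function push : ℤ × List ℤ × ℕ → ℤ × List ℤ × ℕ is a bijection. -/
theorem push_of_ne_zero {u : ℤ} (hu : u ≠ 0) (s : List ℤ) (c : ℕ) :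
    push (u, s, c + 1) = (u, s, c) := by
  unfold push; split <;> simp_all

theorem pop_of_ne_zero {u : ℤ} (hu : u ≠ 0) (s : List ℤ) (c : ℕ) :
    pop (u, s, c) = (u, s, c + 1) := by
  unfold pop; split <;> simp_all

theorem leftInverse_pop_push : Function.LeftInverse pop push := by
  rintro ⟨u, s, _ | c⟩
  · rfl
  obtain rfl | hu := eq_or_ne u 0
  · cases s <;> rfl
  · rw [push_of_ne_zero hu, pop_of_ne_zero hu]

theorem rightInverse_pop_push : Function.RightInverse pop push := by
  rintro ⟨u, s, c⟩
  obtain rfl | hu := eq_or_ne u 0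
  · rcases s with _ | ⟨v, t⟩
    · rfl
    · cases c <;> rfl
  · rw [pop_of_ne_zero hu, push_of_ne_zero hu]

theorem push_bijective : Function.Bijective push :=
  ⟨leftInverse_pop_push.injective, rightInverse_pop_push.surjective⟩
end
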